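/- Let A be a normed PI-algebra over ℝ or ℂ. If the completion C(A) is nil, then A is nilpotent. -/

import Mathlib

open Filter Topology

noncomputable section

/-- The free non-unital associative algebra `F⟨X⟩` on countably many
variables `x₀, x₁, x₂, …`, realized as the semigroup algebra of the free
semigroup on `ℕ`. -/
abbrev FreeNC (F : Type*) [Field F] : Type _ := MonoidAlgebra F (FreeSemigroup ℕ)

/-- Evaluation of noncommutative polynomials: the non-unital algebra
homomorphism `F⟨X⟩ → A` sending `xᵢ` to `v i`. -/
def evalAt {F : Type*} [Field F] {A : Type*} [NonUnitalRing A] [Module F A]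
    [IsScalarTower F A A] [SMulCommClass F A A] (v : ℕ → A) :
    FreeNC F →ₙₐ[F] A :=
  MonoidAlgebra.liftMagma F (FreeSemigroup.lift v)

/-- `f ∈ F⟨X⟩` is a polynomial identity of `A` if it vanishes under every
substitution of elements of `A` for the variables. -/
def IsPolyId (F : Type*) [Field F] (A : Type*) [NonUnitalRing A] [Module F A]
    [IsScalarTower F A A] [SMulCommClass F A A] (f : FreeNC F) : Prop :=
  ∀ v : ℕ → A, evalAt v f = 0

/-- The number of occurrences of the variable `xᵢ` in the monomial (word) `w`. -/
def degOf (w : FreeSemigroup ℕ) (i : ℕ) : ℕ := (w.head :: w.tail).count i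

/- The multihomogeneous component of `f` of multidegree `d`: the sum of the
monomial terms of `f` in which `xᵢ` occurs exactly `d i` times for every `i`. -/
open scoped Classical in
def component {F : Type*} [Field F] (d : ℕ →₀ ℕ) (f : FreeNC F) : FreeNC F :=
  MonoidAlgebra.ofCoeff (Finsupp.filter (fun w => ∀ i, degOf w i = d i) f.coeff)

/-- `prodSeq f n = f 0 * f 1 * ⋯ * f n`, a product of `n + 1` elements. -/
def prodSeq {A : Type*} [Mul A] (f : ℕ → A) : ℕ → A
  | 0 => f 0
  | n+1 => prodSeq f n * f (n+1)

/-- `word n = x₀ x₁ ⋯ xₙ`, the monomial word of length `n + 1`. -/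
def word : ℕ → FreeSemigroup ℕ
  | 0 => .of 0
  | n+1 => word n * .of (n+1)

/-!
By Baire's theorem a nil Banach algebra `B` is nil of bounded index: the closed sets
`{b | b ^ (n + 1) = 0}` cover `B`, so one of them contains a ball `B(a, r)`; for every `x` the
polynomial `t ↦ (a + t • x) ^ (n + 1)` then vanishes near `0`, so its top coefficient
`x ^ (n + 1)` is zero. By the Nagata–Higman theorem in characteristic zero, `B` is nilpotent,
and so is `A`, which embeds in it.

Nagata–Higman is proved relative to an ideal `K`, by Higman's argument: if `x ^ (m + 1) ∈ K` for
`x ∈ S`, then so is the linearization `∑ x ^ i * y * x ^ (m - i)`, and a double-sum identity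
gives `(m + 1) • x ^ m * z * y ^ m ∈ K`. Hence `J S J ⊆ K` for `J = K + (x ^ m | x ∈ S)`, while
`x ^ m ∈ J` on `S`, which doubles the length of the products known to lie in `K`.
-/

open Polynomial Finset

section Pencil

variable {F R : Type*} [Field F] [Ring R] [Algebra F R]

theorem Polynomial.coeff_mem_of_forall_eval_algebraMap_mem (K : Submodule F R) (p : R[X])
    {s : Set F} (hs : s.Infinite) (h : ∀ t ∈ s, p.eval (algebraMap F R t) ∈ K) (k : ℕ) :
    p.coeff k ∈ K := by
  rw [← Submodule.Quotient.mk_eq_zero, ← Module.forall_dual_apply_eq_zero_iff F]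
  intro φ
  set ψ : R →ₗ[F] F := φ ∘ₗ K.mkQ
  let q : F[X] := ∑ n ∈ p.support, monomial n (ψ (p.coeff n))
  have hcoeff : q.coeff k = ψ (p.coeff k) := by
    simp only [q, finsetSum_coeff, coeff_monomial, sum_ite_eq']
    split_ifs with hk
    · rfl
    · rw [notMem_support_iff.mp hk, map_zero]
  have hroots : {t | q.IsRoot t}.Infinite := by
    refine hs.mono fun t ht => ?_
    have : ψ (p.eval (algebraMap F R t)) = 0 := by
      simp [ψ, (Submodule.Quotient.mk_eq_zero K).mpr (h t ht)]
    simp only [Set.mem_ofPred_eq, IsRoot.def, q, eval_finsetSum, eval_monomial]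
    rw [eval_eq_sum, Polynomial.sum_def, map_sum] at this
    simpa [← map_pow, ← Algebra.commutes, ← Algebra.smul_def, mul_comm] using this
  simpa [ψ, q.eq_zero_of_infinite_isRoot hroots] using hcoeff.symm

theorem Polynomial.eval_algebraMap_pow_C_add_C_mul_X (x y : R) (t : F) (m : ℕ) :
    ((C x + C y * X) ^ m).eval (algebraMap F R t) = (x + t • y) ^ m := by
  let ev := eval₂RingHom' (RingHom.id R) (algebraMap F R t) fun a => (Algebra.commutes t a).symm
  have hev (p : R[X]) : ev p = p.eval (algebraMap F R t) := rfl
  rw [← hev, map_pow, map_add, map_mul, hev, hev, hev]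
  simp [Algebra.smul_def, Algebra.commutes]

theorem Polynomial.coeff_pow_C_add_C_mul_X_self (x y : R) (m : ℕ) :
    ((C x + C y * X) ^ m).coeff m = y ^ m := by
  have h : (C x + C y * X).natDegree ≤ 1 := by compute_degree
  simpa using coeff_pow_of_natDegree_le (m := m) h

end Pencil

section Linearization

variable {R : Type*} [Ring R]

def powLinearization (n : ℕ) (x y : R) : R :=
  ∑ i ∈ range n, x ^ i * y * x ^ (n - 1 - i)

theorem powLinearization_succ (n : ℕ) (x y : R) :
    powLinearization (n + 1) x y = powLinearization n x y * x + x ^ n * y := by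
  rw [powLinearization, sum_range_succ, powLinearization, sum_mul]
  congr 1
  · refine sum_congr rfl fun i hi => ?_
    rw [show n + 1 - 1 - i = n - 1 - i + 1 by have := mem_range.mp hi; omega, pow_succ,
      ← mul_assoc]
  · simp

theorem powLinearization_one_right (n : ℕ) (x : R) :
    powLinearization n x 1 = n • x ^ (n - 1) := by
  have hterm : ∀ i ∈ range n, x ^ i * 1 * x ^ (n - 1 - i) = x ^ (n - 1) := fun i hi => by
    rw [mul_one, ← pow_add, Nat.add_sub_cancel' (by have := mem_range.mp hi; omega)]
  rw [powLinearization, sum_congr rfl hterm, sum_const, card_range]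

theorem Polynomial.coeff_one_pow_C_add_C_mul_X (x y : R) (n : ℕ) :
    ((C x + C y * X) ^ n).coeff 1 = powLinearization n x y := by
  have hconst (n : ℕ) : ((C x + C y * X) ^ n).coeff 0 = x ^ n := by
    induction n with
    | zero => simp
    | succ n ih => simp [pow_succ, mul_coeff_zero, ih]
  induction n with
  | zero => simp [powLinearization, coeff_one]
  | succ n ih =>
    rw [pow_succ, mul_add, ← mul_assoc, coeff_add, coeff_mul_C, coeff_mul_X, mul_coeff_zero,
      coeff_C_zero, ih, hconst, powLinearization_succ]

/-- Both sides are `∑ i, ∑ j, x ^ i * z * y ^ j * x ^ (m - i) * y ^ (m - j)`. -/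
theorem higman_identity (m : ℕ) (x y z : R) :
    ∑ j ∈ range (m + 1), powLinearization (m + 1) x (z * y ^ j) * y ^ (m - j)
      = ∑ i ∈ range (m + 1), x ^ i * z * powLinearization (m + 1) y (x ^ (m - i)) := by
  simp only [powLinearization, Nat.add_sub_cancel, sum_mul, mul_sum]
  rw [sum_comm]
  simp only [mul_assoc]

end Linearization

section NagataHigman

variable {F R : Type*} [Field F] [Ring R] [Algebra F R] {S K : TwoSidedIdeal R}

theorem TwoSidedIdeal.smul_mem (K : TwoSidedIdeal R) (t : F) {x : R} (hx : x ∈ K) :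
    t • x ∈ K := by
  rw [Algebra.smul_def]
  exact K.mul_mem_left _ _ hx

theorem TwoSidedIdeal.pow_mem_of_mem (S : TwoSidedIdeal R) {x : R} (hx : x ∈ S) (n : ℕ)
    (hn : 0 < n) : x ^ n ∈ S := by
  obtain ⟨k, rfl⟩ := Nat.exists_eq_add_one_of_ne_zero hn.ne'
  rw [pow_succ]
  exact S.mul_mem_left _ _ hx

variable (F) in
theorem powLinearization_mem [Infinite F] {n : ℕ} (hS : ∀ x ∈ S, x ^ n ∈ K) {x y : R}
    (hx : x ∈ S) (hy : y ∈ S) : powLinearization n x y ∈ K := by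
  rw [← coeff_one_pow_C_add_C_mul_X]
  refine (coeff_mem_of_forall_eval_algebraMap_mem (K.asIdeal.restrictScalars F) _
    Set.infinite_univ (fun t _ => ?_) 1 :)
  rw [Submodule.restrictScalars_mem, TwoSidedIdeal.mem_asIdeal,
    eval_algebraMap_pow_C_add_C_mul_X]
  exact hS _ (S.add_mem hx (S.smul_mem t hy))

variable (F) in
theorem pow_mul_mul_pow_mem [CharZero F] {m : ℕ} (hS : ∀ x ∈ S, x ^ (m + 1) ∈ K) {x y z : R}
    (hx : x ∈ S) (hy : y ∈ S) (hz : z ∈ S) : x ^ m * z * y ^ m ∈ K := by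
  have hsum : ∑ j ∈ range (m + 1), powLinearization (m + 1) x (z * y ^ j) * y ^ (m - j) ∈ K :=
    sum_mem fun j _ => K.mul_mem_right _ _
      (powLinearization_mem F hS hx (S.mul_mem_right _ _ hz))
  have hrest : ∑ i ∈ range m, x ^ i * z * powLinearization (m + 1) y (x ^ (m - i)) ∈ K :=
    sum_mem fun i hi => K.mul_mem_left _ _
      (powLinearization_mem F hS hy (S.pow_mem_of_mem hx _ (by have := mem_range.mp hi; omega)))
  rw [higman_identity, sum_range_succ, Nat.sub_self, pow_zero, powLinearization_one_right,
    Nat.add_sub_cancel, mul_smul_comm, ← Nat.cast_smul_eq_nsmul F] at hsum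
  have hm : ((m + 1 : ℕ) : F) ≠ 0 := Nat.cast_ne_zero.mpr m.succ_ne_zero
  have := K.smul_mem ((m + 1 : ℕ) : F)⁻¹ ((add_mem_cancel_left hrest).mp hsum)
  rwa [smul_smul, inv_mul_cancel₀ hm, one_smul] at this

variable (F) in
theorem mul_mul_mem_of_mem_sup_span_pow [CharZero F] {m : ℕ} (hS : ∀ x ∈ S, x ^ (m + 1) ∈ K)
    {p x q : R} (hp : p ∈ K ⊔ TwoSidedIdeal.span ((· ^ m) '' S)) (hx : x ∈ S)
    (hq : q ∈ K ⊔ TwoSidedIdeal.span ((· ^ m) '' S)) : p * x * q ∈ K := by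
  set J := K ⊔ TwoSidedIdeal.span ((· ^ m) '' S)
  let T₁ : TwoSidedIdeal R := .mk' {q | ∀ a ∈ S, ∀ z ∈ S, a ^ m * z * q ∈ K}
    (fun _ _ _ _ => by simp)
    (fun hq hq' a ha z hz => by simpa [mul_add] using K.add_mem (hq a ha z hz) (hq' a ha z hz))
    (fun hq a ha z hz => by simpa [mul_neg] using K.neg_mem (hq a ha z hz))
    (fun {r _} hq a ha z hz => by
      simpa [mul_assoc] using hq a ha (z * r) (S.mul_mem_right _ _ hz))
    (fun {_ r} hq a ha z hz => by simpa [mul_assoc] using K.mul_mem_right _ r (hq a ha z hz))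
  have hJT₁ : J ≤ T₁ := by
    refine sup_le (fun q hq => ?_) (TwoSidedIdeal.span_le.mpr ?_)
    · exact (TwoSidedIdeal.mem_mk' ..).mpr fun a _ z _ => K.mul_mem_left _ _ hq
    · rintro _ ⟨b, hb, rfl⟩
      exact (TwoSidedIdeal.mem_mk' ..).mpr fun a ha z hz => pow_mul_mul_pow_mem F hS ha hb hz
  let T₂ : TwoSidedIdeal R := .mk' {p | ∀ z ∈ S, ∀ q ∈ J, p * z * q ∈ K}
    (fun _ _ _ _ => by simp)
    (fun hp hp' z hz q hq => by simpa [add_mul] using K.add_mem (hp z hz q hq) (hp' z hz q hq))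
    (fun hp z hz q hq => by simpa [neg_mul] using K.neg_mem (hp z hz q hq))
    (fun {r _} hp z hz q hq => by simpa [mul_assoc] using K.mul_mem_left r _ (hp z hz q hq))
    (fun {_ r} hp z hz q hq => by
      simpa [mul_assoc] using hp (r * z) (S.mul_mem_left _ _ hz) q hq)
  have hJT₂ : J ≤ T₂ := by
    refine sup_le (fun p hp => ?_) (TwoSidedIdeal.span_le.mpr ?_)
    · exact (TwoSidedIdeal.mem_mk' ..).mpr fun z _ q _ =>
        K.mul_mem_right _ _ (K.mul_mem_right _ _ hp)
    · rintro _ ⟨a, ha, rfl⟩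
      exact (TwoSidedIdeal.mem_mk' ..).mpr fun z hz q hq =>
        (TwoSidedIdeal.mem_mk' ..).mp (hJT₁ hq) a ha z hz
  exact (TwoSidedIdeal.mem_mk' ..).mp (hJT₂ hp) x hx q hq

variable (F) in
theorem list_prod_mem_of_forall_pow_mem [CharZero F] (n : ℕ) (hS : ∀ x ∈ S, x ^ n ∈ K)
    (l : List R) (hl : ∀ x ∈ l, x ∈ S) (hlen : l.length = 2 ^ n - 1) : l.prod ∈ K := by
  induction n generalizing K l with
  | zero => simpa using K.mul_mem_left l.prod 1 (by simpa using hS 0 S.zero_mem)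
  | succ m ih =>
    set J := K ⊔ TwoSidedIdeal.span ((· ^ m) '' S)
    have hSJ : ∀ x ∈ S, x ^ m ∈ J := fun x hx =>
      TwoSidedIdeal.mem_sup_right (TwoSidedIdeal.subset_span ⟨x, hx, rfl⟩)
    obtain ⟨l₁, x, l₂, rfl, hl₁, hl₂⟩ :
        ∃ l₁ x l₂, l = l₁ ++ x :: l₂ ∧ l₁.length = 2 ^ m - 1 ∧ l₂.length = 2 ^ m - 1 := by
      have : 2 ^ m - 1 < l.length := by rw [hlen, pow_succ]; have := m.one_le_two_pow; omega
      refine ⟨l.take (2 ^ m - 1), l[2 ^ m - 1], l.drop (2 ^ m - 1 + 1), ?_, ?_, ?_⟩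
      · rw [List.getElem_cons_drop, List.take_append_drop]
      · rw [List.length_take]; omega
      · rw [List.length_drop, hlen, pow_succ]; omega
    simp only [List.mem_append, List.mem_cons] at hl
    rw [List.prod_append, List.prod_cons, ← mul_assoc]
    exact mul_mul_mem_of_mem_sup_span_pow F hS
      (ih hSJ l₁ (fun y hy => hl y (.inl hy)) hl₁) (hl x (.inr (.inl rfl)))
      (ih hSJ l₂ (fun y hy => hl y (.inr (.inr hy))) hl₂)

end NagataHigman

theorem map_prodSeq {M N G : Type*} [Mul M] [Mul N] [FunLike G M N] [MulHomClass G M N]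
    (φ : G) (f : ℕ → M) (n : ℕ) : φ (prodSeq f n) = prodSeq (fun i => φ (f i)) n := by
  induction n with
  | zero => rfl
  | succ n ih => simp only [prodSeq, map_mul, ih]

theorem prodSeq_eq_list_prod {M : Type*} [Monoid M] (f : ℕ → M) (n : ℕ) :
    prodSeq f n = ((List.range (n + 1)).map f).prod := by
  induction n with
  | zero => simp [prodSeq]
  | succ n ih =>
    rw [prodSeq, ih, List.range_succ (n := n + 1), List.map_append, List.prod_append]
    simp

theorem prodSeq_const {M : Type*} [Monoid M] (x : M) (n : ℕ) :
    prodSeq (fun _ => x) n = x ^ (n + 1) := by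
  simp [prodSeq_eq_list_prod]

theorem continuous_prodSeq_const {B : Type*} [NonUnitalNormedRing B] (n : ℕ) :
    Continuous fun b : B => prodSeq (fun _ => b) n := by
  induction n with
  | zero => exact continuous_id
  | succ n ih => exact ih.mul continuous_id

theorem prodSeq_eq_zero_of_forall_prodSeq_const_eq_zero {F A : Type*} [Field F] [CharZero F]
    [NonUnitalRing A] [Module F A] [IsScalarTower F A A] [SMulCommClass F A A] {n : ℕ}
    (h : ∀ x : A, prodSeq (fun _ => x) n = 0) (f : ℕ → A) :
    prodSeq f (2 ^ (n + 1) - 2) = 0 := by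
  let inr := Unitization.inrNonUnitalAlgHom F A
  let S := TwoSidedIdeal.ker (Unitization.fstHom F A)
  have hS : ∀ z ∈ S, z ^ (n + 1) ∈ (⊥ : TwoSidedIdeal _) := fun z hz => by
    have hz : z = inr z.snd :=
      Unitization.ext (by simpa [S, inr, TwoSidedIdeal.mem_ker] using hz) rfl
    rw [TwoSidedIdeal.mem_bot, hz, ← prodSeq_const, ← map_prodSeq, h, map_zero]
  have hprod := list_prod_mem_of_forall_pow_mem F (n + 1) hS
    ((List.range (2 ^ (n + 1) - 1)).map fun i => inr (f i))
    (by simp [S, inr, TwoSidedIdeal.mem_ker]) (by simp)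
  have hlen : 2 ^ (n + 1) - 2 + 1 = 2 ^ (n + 1) - 1 := by
    have := Nat.one_lt_two_pow (n := n + 1) (by omega); omega
  apply Unitization.inr_injective (R := F)
  change inr _ = inr 0
  rwa [map_zero, map_prodSeq, prodSeq_eq_list_prod, hlen, ← TwoSidedIdeal.mem_bot]

theorem exists_forall_prodSeq_const_eq_zero (F : Type*) [RCLike F] {B : Type*}
    [NonUnitalNormedRing B] [NormedSpace F B] [IsScalarTower F B B] [SMulCommClass F B B]
    [CompleteSpace B] (hnil : ∀ b : B, ∃ n, prodSeq (fun _ => b) n = 0) :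
    ∃ n, ∀ x : B, prodSeq (fun _ => x) n = 0 := by
  have hclosed (n : ℕ) : IsClosed {b : B | prodSeq (fun _ => b) n = 0} :=
    isClosed_eq (continuous_prodSeq_const n) continuous_const
  obtain ⟨n, a, ha⟩ :=
    nonempty_interior_of_iUnion_of_closed hclosed (Set.iUnion_eq_univ_iff.mpr hnil)
  obtain ⟨r, hr, hball⟩ := Metric.isOpen_iff.mp isOpen_interior a ha
  refine ⟨n, fun x => ?_⟩
  let inr := Unitization.inrNonUnitalAlgHom F B
  have hε : 0 < r / (‖x‖ + 1) := by positivity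
  have hvanish : ∀ t ∈ Metric.ball (0 : F) (r / (‖x‖ + 1)),
      ((C (inr a) + C (inr x) * X) ^ (n + 1)).eval (algebraMap F _ t) ∈ (⊥ : Submodule F _) := by
    intro t ht
    have hsmall : ‖t • x‖ < r := by
      rw [mem_ball_zero_iff, lt_div_iff₀ (by positivity)] at ht
      rw [norm_smul]
      nlinarith [norm_nonneg t, norm_nonneg x]
    have hmem : a + t • x ∈ interior _ := hball (by simpa [dist_eq_norm] using hsmall)
    rw [eval_algebraMap_pow_C_add_C_mul_X, Submodule.mem_bot, ← map_smul, ← map_add,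
      ← prodSeq_const, ← map_prodSeq, interior_subset hmem, map_zero]
  have hcoeff := coeff_mem_of_forall_eval_algebraMap_mem _ _
    (infinite_of_mem_nhds 0 (Metric.ball_mem_nhds 0 hε)) hvanish (n + 1)
  rw [coeff_pow_C_add_C_mul_X_self, Submodule.mem_bot, ← prodSeq_const, ← map_prodSeq,
    ← map_zero inr] at hcoeff
  exact Unitization.inr_injective hcoeff

theorem stmt_12_general {F : Type*} [RCLike F] {A B : Type*}
    [NonUnitalNormedRing A] [NormedSpace F A] [IsScalarTower F A A] [SMulCommClass F A A]
    [NonUnitalNormedRing B] [NormedSpace F B] [IsScalarTower F B B] [SMulCommClass F B B]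
    [CompleteSpace B]
    (ι : A →ₙₐ[F] B) (hι : Isometry ι)
    (hnil : ∀ b : B, ∃ n : ℕ, prodSeq (fun _ => b) n = 0) :
    ∃ N : ℕ, ∀ f : ℕ → A, prodSeq f N = 0 := by
  obtain ⟨n, hn⟩ := exists_forall_prodSeq_const_eq_zero F hnil
  refine ⟨2 ^ (n + 1) - 2, fun f => hι.injective ?_⟩
  rw [map_prodSeq, map_zero]
  exact prodSeq_eq_zero_of_forall_prodSeq_const_eq_zero (F := F) hn _

/-- if `A` is a normed PI-algebra over `ℝ` or `ℂ` whose
completion `C(A)` (realized as a Banach algebra `B` containing `A`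
isometrically and densely) is nil, then `A` is nilpotent. -/
theorem stmt_12 {F : Type*} [RCLike F] {A B : Type*}
    [NonUnitalNormedRing A] [NormedSpace F A] [IsScalarTower F A A] [SMulCommClass F A A]
    [NonUnitalNormedRing B] [NormedSpace F B] [IsScalarTower F B B] [SMulCommClass F B B]
    [CompleteSpace B]
    (hPI : ∃ f : FreeNC F, f ≠ 0 ∧ IsPolyId F A f)
    (ι : A →ₙₐ[F] B) (hι : Isometry ι) (hdense : DenseRange ι)
    (hnil : ∀ b : B, ∃ n : ℕ, prodSeq (fun _ => b) n = 0) :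
    ∃ N : ℕ, ∀ f : ℕ → A, prodSeq f N = 0 :=
  stmt_12_general ι hι hnil
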